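/- Let H be a real Hilbert space and ℓ_1, …, ℓ_n continuous linearly independent linear functionals on H, with V₁ = ⋂_{j=1}^n ker ℓ_j, and let ψ_1, …, ψ_n ∈ V₁^⊥ satisfy ℓ_j(ψ_k) = δ_{jk}. Let g be a continuous linear functional on H and let u ∈ H satisfy ⟨u, v⟩ = g(v) for all v ∈ H. Define T_{jk} = ⟨ψ_j, ψ_k⟩ and c ∈ ℝ^n by c_j = ℓ_j(u). Then for every k = 1, …, n, Σ_{j=1}^n T_{kj} c_j = g(ψ_k); that is, the vector of exact average values of the fine-scale solution solves the upscaled linear system with transmissibility matrix T and right-hand side (g(ψ_k))_k. -/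

import Mathlib

open scoped InnerProductSpace

/-!
Writing `c_j = ℓ_j(u)`, the functionals `ℓ_i` all vanish on `u - Σ_j c_j ψ_j` because
`ℓ_i(ψ_j) = δ_{ij}`, so this vector lies in `V₁` and is orthogonal to every `ψ_k ∈ V₁ᗮ`.
Hence `Σ_j ⟪ψ_k, ψ_j⟫ c_j = ⟪u, ψ_k⟫ = g(ψ_k)`.
-/

theorem sub_sum_smul_mem_iInf_ker {R M ι : Type*} [Ring R] [AddCommGroup M] [Module R M]
    [Fintype ι] [DecidableEq ι] (ℓ : ι → M →ₗ[R] R) (ψ : ι → M)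
    (hδ : ∀ j k, ℓ j (ψ k) = if j = k then 1 else 0) (x : M) :
    x - ∑ j, ℓ j x • ψ j ∈ ⨅ j, LinearMap.ker (ℓ j) := by
  simp only [Submodule.mem_iInf, LinearMap.mem_ker, map_sub, map_sum, map_smul, hδ,
    smul_eq_mul, mul_ite, mul_one, mul_zero, Finset.sum_ite_eq, Finset.mem_univ, if_true,
    sub_self, implies_true]

theorem sum_inner_mul_eq_inner_of_mem_orthogonal_iInf_ker {H ι : Type*}
    [NormedAddCommGroup H] [InnerProductSpace ℝ H] [Fintype ι] [DecidableEq ι]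
    (ℓ : ι → H →ₗ[ℝ] ℝ) (ψ : ι → H) (hδ : ∀ j k, ℓ j (ψ k) = if j = k then 1 else 0)
    (hψ : ∀ k, ψ k ∈ (⨅ j, LinearMap.ker (ℓ j))ᗮ) (x : H) (k : ι) :
    ∑ j, ⟪ψ k, ψ j⟫_ℝ * ℓ j x = ⟪x, ψ k⟫_ℝ := by
  have horth : ⟪x - ∑ j, ℓ j x • ψ j, ψ k⟫_ℝ = 0 :=
    Submodule.inner_right_of_mem_orthogonal (sub_sum_smul_mem_iInf_ker ℓ ψ hδ x) (hψ k)
  rw [inner_sub_left, sum_inner, sub_eq_zero] at horth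
  rw [horth]
  exact Finset.sum_congr rfl fun j _ => by rw [real_inner_smul_left, real_inner_comm, mul_comm]

theorem exact_averages_solve_upscaled_system_general
    {H : Type*} [NormedAddCommGroup H] [InnerProductSpace ℝ H]
    {n : ℕ} (ℓ : Fin n → H →L[ℝ] ℝ)
    (V₁ : Submodule ℝ H) (hV₁ : V₁ = ⨅ j, LinearMap.ker (ℓ j : H →ₗ[ℝ] ℝ))
    (ψ : Fin n → H) (hψmem : ∀ k, ψ k ∈ V₁ᗮ)
    (hδ : ∀ j k, ℓ j (ψ k) = if j = k then 1 else 0)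
    (g : H →L[ℝ] ℝ)
    (u : H) (hu : ∀ v : H, ⟪u, v⟫_ℝ = g v)
    (T : Matrix (Fin n) (Fin n) ℝ) (hT : ∀ j k, T j k = ⟪ψ j, ψ k⟫_ℝ)
    (c : Fin n → ℝ) (hc : ∀ j, c j = ℓ j u) :
    ∀ k, ∑ j, T k j * c j = g (ψ k) := by
  subst hV₁
  intro k
  simp only [hT, hc, ← hu]
  exact sum_inner_mul_eq_inner_of_mem_orthogonal_iInf_ker (fun j => (ℓ j : H →ₗ[ℝ] ℝ)) ψ hδ
    hψmem u k

/-- The vector `c_j = ℓ_j(u)` of exact average values of the fine-scale solution solves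
the upscaled linear system with transmissibility matrix `T_{jk} = ⟪ψ_j, ψ_k⟫` and
right-hand side `(g(ψ_k))_k`: for every `k`, `Σ_j T_{kj} c_j = g(ψ_k)`. -/
theorem exact_averages_solve_upscaled_system
    {H : Type*} [NormedAddCommGroup H] [InnerProductSpace ℝ H] [CompleteSpace H]
    {n : ℕ} (ℓ : Fin n → H →L[ℝ] ℝ) (hli : LinearIndependent ℝ ℓ)
    (V₁ : Submodule ℝ H) (hV₁ : V₁ = ⨅ j, LinearMap.ker (ℓ j : H →ₗ[ℝ] ℝ))
    (ψ : Fin n → H) (hψmem : ∀ k, ψ k ∈ V₁ᗮ)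
    (hδ : ∀ j k, ℓ j (ψ k) = if j = k then 1 else 0)
    (g : H →L[ℝ] ℝ)
    (u : H) (hu : ∀ v : H, ⟪u, v⟫_ℝ = g v)
    (T : Matrix (Fin n) (Fin n) ℝ) (hT : ∀ j k, T j k = ⟪ψ j, ψ k⟫_ℝ)
    (c : Fin n → ℝ) (hc : ∀ j, c j = ℓ j u) :
    ∀ k, ∑ j, T k j * c j = g (ψ k) :=
  exact_averages_solve_upscaled_system_general ℓ V₁ hV₁ ψ hψmem hδ g u hu T hT c hc
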